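/- In a sequential effect algebra, if p is an idempotent and a, b ≤ p with a ⊕ b defined, then a ⊕ b ≤ p. -/
import Mathlib


universe u

/-- `EAle orth add a b` : the effect-algebra order `a ≤ b` iff `∃ c, a ⊕ c = b`. -/
def EAle {α : Type u} (orth : α → α → Prop) (add : α → α → α) (a b : α) : Prop :=
  ∃ c, orth a c ∧ add a c = b

/-- An effect algebra: partial sum `add` (defined when `orth` holds), zero, complement. -/
structure EffectAlgebra (α : Type u) where
  orth : α → α → Prop
  add : α → α → α
  zero : α
  compl : α → α
  orth_comm : ∀ a b, orth a b → orth b a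
  add_comm' : ∀ a b, orth a b → add a b = add b a
  orth_zero : ∀ a, orth a zero
  add_zero' : ∀ a, add a zero = a
  orth_assoc₁ : ∀ a b c, orth a b → orth (add a b) c → orth b c
  orth_assoc₂ : ∀ a b c, orth a b → orth (add a b) c → orth a (add b c)
  add_assoc' : ∀ a b c, orth a b → orth (add a b) c → add (add a b) c = add a (add b c)
  orth_compl : ∀ a, orth a (compl a)
  add_compl : ∀ a, add a (compl a) = compl zero
  compl_unique : ∀ a b, orth a b → add a b = compl zero → b = compl a
  orth_one : ∀ a, orth a (compl zero) → a = zero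

namespace EffectAlgebra
variable {α : Type u}
/-- The effect-algebra order. -/
def le (E : EffectAlgebra α) : α → α → Prop := EAle E.orth E.add
/-- The unit `1 := 0⊥`. -/
def one (E : EffectAlgebra α) : α := E.compl E.zero
end EffectAlgebra

/-- A sequential effect algebra: an effect algebra with a total product `seq`
satisfying S1–S5. -/
structure SEA (α : Type u) extends EffectAlgebra α where
  seq : α → α → α
  seq_orth : ∀ a b c, orth b c → orth (seq a b) (seq a c)                                -- S1
  seq_add : ∀ a b c, orth b c → seq a (add b c) = add (seq a b) (seq a c)                -- S1
  one_seq : ∀ a, seq (compl zero) a = a                                                  -- S2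
  seq_zero_symm : ∀ a b, seq a b = zero → seq b a = zero                                 -- S3
  comm_compl : ∀ a b, seq a b = seq b a → seq a (compl b) = seq (compl b) a              -- S4
  comm_assoc : ∀ a b c, seq a b = seq b a → seq a (seq b c) = seq (seq a b) c            -- S4
  comm_seq : ∀ a b c, seq c a = seq a c → seq c b = seq b c →
    seq c (seq a b) = seq (seq a b) c                                                    -- S5
  comm_add : ∀ a b c, seq c a = seq a c → seq c b = seq b c → orth a b →
    seq c (add a b) = seq (add a b) c                                                    -- S5


section Aux
universe v
variable {α : Type v}

lemma ea_compl_compl (E : EffectAlgebra α) (a : α) : E.compl (E.compl a) = a := by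
  have h1 := E.orth_compl a
  have h2 := E.orth_comm _ _ h1
  have h3 : E.add (E.compl a) a = E.compl E.zero := by
    rw [← E.add_comm' a (E.compl a) h1, E.add_compl]
  exact (E.compl_unique _ _ h2 h3).symm

lemma ea_cancel (E : EffectAlgebra α) (a c : α) (h : E.orth a c)
    (h2 : E.add a c = a) : c = E.zero := by
  have o1 : E.orth (E.add a c) (E.compl a) := by rw [h2]; exact E.orth_compl a
  have o2 : E.orth c (E.compl a) := E.orth_assoc₁ a c _ h o1
  have o3 : E.orth a (E.add c (E.compl a)) := E.orth_assoc₂ a c _ h o1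
  have e1 : E.add a (E.add c (E.compl a)) = E.compl E.zero := by
    rw [← E.add_assoc' a c _ h o1, h2, E.add_compl]
  have e2 : E.add c (E.compl a) = E.compl a := E.compl_unique a _ o3 e1
  have o5 : E.orth (E.add c (E.compl a)) a := by
    rw [e2]; exact E.orth_comm _ _ (E.orth_compl a)
  have o6 : E.orth c (E.add (E.compl a) a) := E.orth_assoc₂ c (E.compl a) a o2 o5
  have e3 : E.add (E.compl a) a = E.compl E.zero := by
    rw [← E.add_comm' a (E.compl a) (E.orth_compl a), E.add_compl]
  rw [e3] at o6
  exact E.orth_one c o6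

lemma ea_add_eq_zero_left (E : EffectAlgebra α) (x y : α) (h : E.orth x y)
    (h2 : E.add x y = E.zero) : x = E.zero := by
  have o1 : E.orth (E.add x y) (E.compl E.zero) := by
    rw [h2]; exact E.orth_comm _ _ (E.orth_zero (E.compl E.zero))
  have hy : y = E.zero := E.orth_one y (E.orth_assoc₁ x y _ h o1)
  rw [hy, E.add_zero'] at h2
  exact h2

lemma sea_seq_zero (S : SEA α) (a : α) : S.seq a S.zero = S.zero := by
  have h0 : S.orth S.zero S.zero := S.orth_zero _
  have h1 := S.seq_add a S.zero S.zero h0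
  rw [S.add_zero'] at h1
  exact ea_cancel S.toEffectAlgebra _ _ (S.seq_orth a _ _ h0) h1.symm

lemma sea_seq_one (S : SEA α) (a : α) : S.seq a (S.compl S.zero) = a := by
  have hz : S.seq a S.zero = S.seq S.zero a := by
    rw [sea_seq_zero]
    exact (S.seq_zero_symm a S.zero (sea_seq_zero S a)).symm
  have h := S.comm_compl a S.zero hz
  rw [h, S.one_seq]

lemma sea_idem_compl (S : SEA α) (p : α) (hp : S.seq p p = p) :
    S.seq p (S.compl p) = S.zero := by
  have h1 : S.seq p (S.add p (S.compl p)) =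
      S.add (S.seq p p) (S.seq p (S.compl p)) := S.seq_add p p _ (S.orth_compl p)
  rw [S.add_compl, sea_seq_one, hp] at h1
  have ho : S.orth p (S.seq p (S.compl p)) := by
    have := S.seq_orth p p (S.compl p) (S.orth_compl p)
    rwa [hp] at this
  exact ea_cancel S.toEffectAlgebra p _ ho h1.symm

lemma sea_le_idem (S : SEA α) (p a : α) (hp : S.seq p p = p)
    (ha : S.le a p) : S.seq p a = a := by
  obtain ⟨c, hoc, hac⟩ := ha
  have h2 : S.seq (S.compl p) p = S.zero :=
    S.seq_zero_symm _ _ (sea_idem_compl S p hp)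
  have h3 : S.add (S.seq (S.compl p) a) (S.seq (S.compl p) c) = S.zero := by
    rw [← S.seq_add _ a c hoc, hac, h2]
  have h4 : S.seq (S.compl p) a = S.zero :=
    ea_add_eq_zero_left S.toEffectAlgebra _ _ (S.seq_orth _ _ _ hoc) h3
  have h5 : S.seq a (S.compl p) = S.zero := S.seq_zero_symm _ _ h4
  have h6 : S.seq a (S.compl p) = S.seq (S.compl p) a := by rw [h4, h5]
  have h7 := S.comm_compl a (S.compl p) h6
  rw [ea_compl_compl] at h7
  have h8 : S.seq a (S.add p (S.compl p)) =
      S.add (S.seq a p) (S.seq a (S.compl p)) := S.seq_add a p _ (S.orth_compl p)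
  rw [S.add_compl, sea_seq_one, h5, S.add_zero'] at h8
  exact (h8.trans h7).symm

end Aux

/-- If `p` is idempotent, `a, b ≤ p` and `a ⊕ b` is defined, then `a ⊕ b ≤ p`. -/
theorem sea_add_le_idem {α : Type u} (E : SEA α) (p a b : α)
    (hp : E.seq p p = p) (ha : E.le a p) (hb : E.le b p) (hab : E.orth a b) :
    E.le (E.add a b) p := by
  have ha' := sea_le_idem E p a hp ha
  have hb' := sea_le_idem E p b hp hb
  have h1 : E.seq p (E.add a b) = E.add a b := by
    rw [E.seq_add p a b hab, ha', hb']
  refine ⟨E.seq p (E.compl (E.add a b)), ?_, ?_⟩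
  · have := E.seq_orth p _ _ (E.orth_compl (E.add a b))
    rwa [h1] at this
  · have h2 := E.seq_add p (E.add a b) (E.compl (E.add a b)) (E.orth_compl _)
    rw [E.add_compl, sea_seq_one, h1] at h2
    exact h2.symm
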